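/- With notation as above and weight Ξ = V_γγ⁺, assume the local robustness condition A = V_βγ V_γγ⁺ G holds (where A = E[∂_γ m_β], G = E[∂_γ m_γ]). Then E[m_β^LR (m_β^LR)ᵀ] − E[m_β^eff (m_β^eff)ᵀ] is positive semidefinite, where m_β^LR = m_β − A(GᵀV_γγ⁺G)⁻¹GᵀV_γγ⁺ m_γ and m_β^eff = m_β − V_βγV_γγ⁺ m_γ. -/

import Mathlib

open Matrix MeasureTheory

/-- The four Penrose conditions characterizing the Moore–Penrose pseudoinverse. -/
def IsMoorePenrose {m n : Type*} [Fintype m] [Fintype n]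
    (A : Matrix m n ℝ) (B : Matrix n m ℝ) : Prop :=
  A * B * A = A ∧ B * A * B = B ∧ (A * B)ᵀ = A * B ∧ (B * A)ᵀ = B * A

/-- Cross-covariance matrix `E[f gᵀ]` of two (zero-mean) random vectors. -/
noncomputable def cov {Ω : Type*} [MeasurableSpace Ω] (P : Measure Ω) {a b : ℕ}
    (f : Ω → Fin a → ℝ) (g : Ω → Fin b → ℝ) : Matrix (Fin a) (Fin b) ℝ :=
  Matrix.of fun i j => ∫ ω, f ω i * g ω j ∂P

section Aux

variable {Ω : Type*} [MeasurableSpace Ω] {P : Measure Ω}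

lemma int_mul2 {f g : Ω → ℝ} (hf : MemLp f 2 P) (hg : MemLp g 2 P) :
    Integrable (fun ω => f ω * g ω) P := by
  have h : MemLp (f • g) 1 P := hg.smul hf
  rw [memLp_one_iff_integrable] at h
  exact h.congr (by filter_upwards with ω; simp [smul_eq_mul])

lemma mp_unique {n : ℕ} {S B C : Matrix (Fin n) (Fin n) ℝ}
    (hB : IsMoorePenrose S B) (hC : IsMoorePenrose S C) : B = C := by
  obtain ⟨hB1, hB2, hB3, hB4⟩ := hB
  obtain ⟨hC1, hC2, hC3, hC4⟩ := hC
  have h1 : S * B = S * C := by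
    have t : Sᵀ = Sᵀ * Cᵀ * Sᵀ := by
      conv_lhs => rw [← hC1]
      simp [transpose_mul, mul_assoc]
    calc S * B = Bᵀ * Sᵀ := by rw [← hB3, transpose_mul]
      _ = Bᵀ * (Sᵀ * Cᵀ * Sᵀ) := by rw [← t]
      _ = (Bᵀ * Sᵀ) * (Cᵀ * Sᵀ) := by simp only [mul_assoc]
      _ = (S * B)ᵀ * (S * C)ᵀ := by simp only [transpose_mul]
      _ = (S * B) * (S * C) := by rw [hB3, hC3]
      _ = (S * B * S) * C := by simp only [mul_assoc]
      _ = S * C := by rw [hB1]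
  have h2 : B * S = C * S := by
    have t : Sᵀ = Sᵀ * Cᵀ * Sᵀ := by
      conv_lhs => rw [← hC1]
      simp [transpose_mul, mul_assoc]
    calc B * S = Sᵀ * Bᵀ := by rw [← hB4, transpose_mul]
      _ = (Sᵀ * Cᵀ * Sᵀ) * Bᵀ := by rw [← t]
      _ = (Sᵀ * Cᵀ) * (Sᵀ * Bᵀ) := by simp only [mul_assoc]
      _ = (C * S)ᵀ * (B * S)ᵀ := by simp only [transpose_mul]
      _ = (C * S) * (B * S) := by rw [hB4, hC4]
      _ = C * (S * B * S) := by simp only [mul_assoc]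
      _ = C * S := by rw [hB1]
  calc B = B * S * B := hB2.symm
    _ = B * (S * C) := by rw [mul_assoc, h1]
    _ = (B * S) * C := by rw [mul_assoc]
    _ = C * S * C := by rw [h2]
    _ = C := hC2

lemma cov_transpose' {a b : ℕ} (f : Ω → Fin a → ℝ) (g : Ω → Fin b → ℝ) :
    (cov P f g)ᵀ = cov P g f := by
  ext i j; simp [cov, mul_comm]

lemma cov_sub_expand {a b : ℕ} (f : Ω → Fin a → ℝ) (g : Ω → Fin b → ℝ)
    (M N : Matrix (Fin a) (Fin b) ℝ)
    (hf : ∀ i, MemLp (fun ω => f ω i) 2 P) (hg : ∀ j, MemLp (fun ω => g ω j) 2 P) :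
    cov P (fun ω => f ω - M.mulVec (g ω)) (fun ω => f ω - N.mulVec (g ω)) =
      cov P f f - cov P f g * Nᵀ - M * cov P g f + M * cov P g g * Nᵀ := by
  have hfg : ∀ (i : Fin a) (l : Fin b), Integrable (fun ω => f ω i * g ω l) P :=
    fun i l => int_mul2 (hf i) (hg l)
  have hgf : ∀ (k : Fin b) (j : Fin a), Integrable (fun ω => g ω k * f ω j) P :=
    fun k j => int_mul2 (hg k) (hf j)
  have hgg : ∀ k l, Integrable (fun ω => g ω k * g ω l) P :=
    fun k l => int_mul2 (hg k) (hg l)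
  ext i j
  have hff : Integrable (fun ω => f ω i * f ω j) P := int_mul2 (hf i) (hf j)
  -- pointwise expansion
  have key : (fun ω => (f ω - M.mulVec (g ω)) i * (f ω - N.mulVec (g ω)) j)
      = fun ω => (f ω i * f ω j - ∑ l, N j l * (f ω i * g ω l))
          - (∑ k, M i k * (g ω k * f ω j) - ∑ k, ∑ l, M i k * (N j l * (g ω k * g ω l))) := by
    funext ω
    have eA : f ω i * ∑ l, N j l * g ω l = ∑ l, N j l * (f ω i * g ω l) := by
      rw [Finset.mul_sum]; exact Finset.sum_congr rfl fun l _ => by ring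
    have eB : (∑ k, M i k * g ω k) * f ω j = ∑ k, M i k * (g ω k * f ω j) := by
      rw [Finset.sum_mul]; exact Finset.sum_congr rfl fun k _ => by ring
    have eC : (∑ k, M i k * g ω k) * (∑ l, N j l * g ω l)
        = ∑ k, ∑ l, M i k * (N j l * (g ω k * g ω l)) := by
      rw [Finset.sum_mul]
      refine Finset.sum_congr rfl fun k _ => ?_
      rw [Finset.mul_sum]; exact Finset.sum_congr rfl fun l _ => by ring
    simp only [Pi.sub_apply, mulVec, dotProduct]
    rw [sub_mul, mul_sub, mul_sub, eA, eB, eC]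
  have i1 : Integrable (fun ω => ∑ l, N j l * (f ω i * g ω l)) P :=
    integrable_finset_sum _ fun l _ => (hfg i l).const_mul _
  have i2 : Integrable (fun ω => ∑ k, M i k * (g ω k * f ω j)) P :=
    integrable_finset_sum _ fun k _ => (hgf k j).const_mul _
  have i3 : Integrable (fun ω => ∑ k, ∑ l, M i k * (N j l * (g ω k * g ω l))) P :=
    integrable_finset_sum _ fun k _ => integrable_finset_sum _ fun l _ =>
      (((hgg k l).const_mul _).const_mul _)
  have lhs_eq : (∫ ω, (f ω - M.mulVec (g ω)) i * (f ω - N.mulVec (g ω)) j ∂P)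
      = (∫ ω, f ω i * f ω j ∂P) - (∑ l, N j l * ∫ ω, f ω i * g ω l ∂P)
        - ((∑ k, M i k * ∫ ω, g ω k * f ω j ∂P)
          - ∑ k, ∑ l, M i k * (N j l * ∫ ω, g ω k * g ω l ∂P)) := by
    have iL : Integrable (fun ω => f ω i * f ω j - ∑ l, N j l * (f ω i * g ω l)) P :=
      hff.sub i1
    have iR : Integrable (fun ω => ∑ k, M i k * (g ω k * f ω j)
        - ∑ k, ∑ l, M i k * (N j l * (g ω k * g ω l))) P := i2.sub i3
    rw [show (fun ω => (f ω - M.mulVec (g ω)) i * (f ω - N.mulVec (g ω)) j) = _ from key]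
    rw [integral_sub iL iR, integral_sub hff i1, integral_sub i2 i3,
      integral_finset_sum _ fun l _ => (hfg i l).const_mul _,
      integral_finset_sum _ fun k _ => (hgf k j).const_mul _,
      integral_finset_sum _ fun k _ => (integrable_finset_sum _ fun l _ =>
        ((hgg k l).const_mul _).const_mul _)]
    congr 1
    · congr 1
      exact Finset.sum_congr rfl fun l _ => integral_const_mul _ _
    congr 1
    · exact Finset.sum_congr rfl fun k _ => integral_const_mul _ _
    · refine Finset.sum_congr rfl fun k _ => ?_
      rw [integral_finset_sum _ fun l _ => ((hgg k l).const_mul _).const_mul _]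
      exact Finset.sum_congr rfl fun l _ => by rw [integral_const_mul, integral_const_mul]
  show (∫ ω, (f ω - M.mulVec (g ω)) i * (f ω - N.mulVec (g ω)) j ∂P) = _
  rw [lhs_eq]
  simp only [cov, Matrix.sub_apply, Matrix.add_apply, Matrix.mul_apply, Matrix.of_apply,
    Matrix.transpose_apply]
  have e1 : ∑ l, N j l * ∫ ω, f ω i * g ω l ∂P = ∑ l, (∫ ω, f ω i * g ω l ∂P) * N j l :=
    Finset.sum_congr rfl fun l _ => mul_comm _ _
  have e2 : ∑ k, ∑ l, M i k * (N j l * ∫ ω, g ω k * g ω l ∂P)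
      = ∑ l, (∑ k, M i k * ∫ ω, g ω k * g ω l ∂P) * N j l := by
    rw [Finset.sum_comm]
    exact Finset.sum_congr rfl fun l _ => by
      rw [Finset.sum_mul]; exact Finset.sum_congr rfl fun k _ => by ring
  rw [e1, e2]
  ring

lemma quad_eq {b : ℕ} (g : Ω → Fin b → ℝ) (hg : ∀ j, MemLp (fun ω => g ω j) 2 P)
    (x : Fin b → ℝ) :
    x ⬝ᵥ (cov P g g).mulVec x = ∫ ω, (∑ k, x k * g ω k) ^ 2 ∂P := by
  have hgg : ∀ k l, Integrable (fun ω => g ω k * g ω l) P :=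
    fun k l => int_mul2 (hg k) (hg l)
  have : ∀ ω, (∑ k, x k * g ω k) ^ 2 = ∑ k, ∑ l, x k * (x l * (g ω k * g ω l)) := by
    intro ω
    rw [sq, Finset.sum_mul]
    refine Finset.sum_congr rfl fun k _ => ?_
    rw [Finset.mul_sum]
    exact Finset.sum_congr rfl fun l _ => by ring
  simp_rw [this]
  rw [integral_finset_sum _ fun k _ => integrable_finset_sum _ fun l _ =>
    (((hgg k l).const_mul _).const_mul _)]
  simp_rw [integral_finset_sum _ fun l (_ : l ∈ Finset.univ) =>
    (((hgg _ l).const_mul _).const_mul _ : Integrable _ P)]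
  simp only [dotProduct, mulVec, cov, Matrix.of_apply]
  refine Finset.sum_congr rfl fun k _ => ?_
  rw [Finset.mul_sum]
  refine Finset.sum_congr rfl fun l _ => ?_
  rw [integral_const_mul, integral_const_mul]
  ring

lemma ker_cov {a b : ℕ} (f : Ω → Fin a → ℝ) (g : Ω → Fin b → ℝ)
    (hf : ∀ i, MemLp (fun ω => f ω i) 2 P) (hg : ∀ j, MemLp (fun ω => g ω j) 2 P)
    (x : Fin b → ℝ) (hx : (cov P g g).mulVec x = 0) :
    (cov P f g).mulVec x = 0 := by
  set G0 : Ω → ℝ := fun ω => ∑ k, x k * g ω k with hG0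
  have hG0m : MemLp G0 2 P := by
    apply memLp_finset_sum (f := fun k ω => x k * g ω k) Finset.univ
    exact fun k _ => (hg k).const_mul _
  have hint : Integrable (fun ω => G0 ω * G0 ω) P := int_mul2 hG0m hG0m
  have hzero : ∫ ω, G0 ω ^ 2 ∂P = 0 := by
    rw [← quad_eq g hg x, hx]; simp
  have hae : G0 =ᵐ[P] 0 := by
    have h2 : (fun ω => G0 ω ^ 2) =ᵐ[P] 0 := by
      rw [← integral_eq_zero_iff_of_nonneg (fun ω => sq_nonneg (G0 ω))
        (by simpa [sq] using hint)]
      exact hzero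
    filter_upwards [h2] with ω hω
    exact pow_eq_zero_iff (by norm_num) |>.mp hω
  ext i
  have hexp : (cov P f g).mulVec x i = ∫ ω, f ω i * G0 ω ∂P := by
    have : ∀ ω, f ω i * G0 ω = ∑ k, x k * (f ω i * g ω k) := by
      intro ω
      rw [hG0, Finset.mul_sum]
      exact Finset.sum_congr rfl fun k _ => by ring
    simp_rw [this]
    rw [integral_finset_sum _ fun k _ => (int_mul2 (hf i) (hg k)).const_mul _]
    simp only [mulVec, dotProduct, cov, Matrix.of_apply]
    exact Finset.sum_congr rfl fun k _ => by rw [integral_const_mul]; ring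
  rw [hexp]
  have : (fun ω => f ω i * G0 ω) =ᵐ[P] 0 := by
    filter_upwards [hae] with ω hω
    simp [hω]
  simp [integral_congr_ae this]

lemma cov_psd {b : ℕ} (g : Ω → Fin b → ℝ) (hg : ∀ j, MemLp (fun ω => g ω j) 2 P) :
    (cov P g g).PosSemidef := by
  rw [posSemidef_iff_dotProduct_mulVec]
  constructor
  · show (cov P g g)ᴴ = cov P g g
    ext i j; simp [cov, conjTranspose_apply, mul_comm]
  · intro x
    show (0:ℝ) ≤ star x ⬝ᵥ (cov P g g).mulVec x
    have : star x = x := by simp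
    rw [this, quad_eq g hg x]
    exact integral_nonneg fun ω => sq_nonneg _

lemma diff_eq {a b : ℕ} (F : Matrix (Fin a) (Fin a) ℝ)
    (V B C : Matrix (Fin a) (Fin b) ℝ) (S : Matrix (Fin b) (Fin b) ℝ)
    (hCS : C * S = V) (hSC : S * Cᵀ = Vᵀ) (hCV : C * Vᵀ = V * Cᵀ) :
    (F - V * Bᵀ - B * Vᵀ + B * S * Bᵀ) - (F - V * Cᵀ - C * Vᵀ + C * S * Cᵀ)
      = (B - C) * S * (B - C)ᵀ := by
  have expand : (B - C) * S * (B - C)ᵀ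
      = B * S * Bᵀ - B * (S * Cᵀ) - C * S * Bᵀ + C * S * Cᵀ := by
    rw [transpose_sub, Matrix.sub_mul, Matrix.sub_mul, Matrix.mul_sub, Matrix.mul_sub,
      Matrix.mul_assoc B S Cᵀ]
    abel
  rw [expand, hSC, hCS, hCV]
  abel

end Aux

/-- With weight `Ξ = V_γγ⁺` and under the local-robustness condition
`A = V_βγ V_γγ⁺ G`, the variance of the locally robust moment dominates
the variance of the efficient (projected) moment. -/
theorem lr_variance_dominates_eff_variance {Ω : Type*} [MeasurableSpace Ω]
    (P : Measure Ω) [IsProbabilityMeasure P] {a b r : ℕ}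
    (mβ : Ω → Fin a → ℝ) (mγ : Ω → Fin b → ℝ)
    (A : Matrix (Fin a) (Fin r) ℝ) (G : Matrix (Fin b) (Fin r) ℝ)
    (Vggp : Matrix (Fin b) (Fin b) ℝ)
    (hβ2 : ∀ i, MemLp (fun ω => mβ ω i) 2 P)
    (hγ2 : ∀ j, MemLp (fun ω => mγ ω j) 2 P)
    (hβ0 : ∀ i, ∫ ω, mβ ω i ∂P = 0)
    (hγ0 : ∀ j, ∫ ω, mγ ω j ∂P = 0)
    (hMP : IsMoorePenrose (cov P mγ mγ) Vggp)
    (hinv : Invertible (Gᵀ * Vggp * G))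
    (hLR : A = cov P mβ mγ * Vggp * G) :
    (cov P
        (fun ω => mβ ω -
          (A * (Gᵀ * Vggp * G)⁻¹ * Gᵀ * Vggp).mulVec (mγ ω))
        (fun ω => mβ ω -
          (A * (Gᵀ * Vggp * G)⁻¹ * Gᵀ * Vggp).mulVec (mγ ω)) -
      cov P
        (fun ω => mβ ω - (cov P mβ mγ * Vggp).mulVec (mγ ω))
        (fun ω => mβ ω - (cov P mβ mγ * Vggp).mulVec (mγ ω))).PosSemidef := by
  set V : Matrix (Fin a) (Fin b) ℝ := cov P mβ mγ with hV
  set S : Matrix (Fin b) (Fin b) ℝ := cov P mγ mγ with hS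
  set B : Matrix (Fin a) (Fin b) ℝ := A * (Gᵀ * Vggp * G)⁻¹ * Gᵀ * Vggp with hB
  set C : Matrix (Fin a) (Fin b) ℝ := V * Vggp with hC
  -- symmetry of S
  have hSsym : Sᵀ = S := by
    rw [hS]; ext i j; simp [cov, mul_comm]
  -- symmetry of Vggp, by uniqueness of the Moore-Penrose inverse
  have hΞsym : Vggpᵀ = Vggp := by
    refine mp_unique (S := S) ?_ hMP
    obtain ⟨h1, h2, h3, h4⟩ := hMP
    refine ⟨?_, ?_, ?_, ?_⟩
    · have h1' := congrArg Matrix.transpose h1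
      simp only [transpose_mul, hSsym] at h1'
      rw [mul_assoc]; exact h1'
    · have h2' := congrArg Matrix.transpose h2
      simp only [transpose_mul, hSsym] at h2'
      rw [mul_assoc]; exact h2' 
    · calc (S * Vggpᵀ)ᵀ = Vggp * Sᵀ := by rw [transpose_mul, transpose_transpose]
        _ = Vggp * S := by rw [hSsym]
        _ = (Vggp * S)ᵀ := h4.symm
        _ = Sᵀ * Vggpᵀ := by rw [transpose_mul]
        _ = S * Vggpᵀ := by rw [hSsym]
    · calc (Vggpᵀ * S)ᵀ = Sᵀ * Vggp := by rw [transpose_mul, transpose_transpose]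
        _ = S * Vggp := by rw [hSsym]
        _ = (S * Vggp)ᵀ := h3.symm
        _ = Vggpᵀ * Sᵀ := by rw [transpose_mul]
        _ = Vggpᵀ * S := by rw [hSsym]
  -- range condition: V Ξ S = V
  have hVXS : V * Vggp * S = V := by
    have hD : S * (1 - Vggp * S) = 0 := by
      rw [mul_sub, mul_one, ← mul_assoc, hMP.1, sub_self]
    have hzero : V * (1 - Vggp * S) = 0 := by
      ext i j
      have hcol : S.mulVec (fun k => (1 - Vggp * S) k j) = 0 := by
        ext i'
        have h0 : (S * (1 - Vggp * S)) i' j = 0 := by rw [hD]; simp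
        simpa [mulVec, dotProduct, Matrix.mul_apply] using h0
      have hker := ker_cov mβ mγ hβ2 hγ2 _ hcol
      have := congrFun hker i
      simpa [mulVec, dotProduct, Matrix.mul_apply] using this
    have e : V * (1 - Vggp * S) = V - V * Vggp * S := by
      rw [Matrix.mul_sub, Matrix.mul_one, Matrix.mul_assoc]
    rw [e] at hzero
    exact (sub_eq_zero.mp hzero).symm
  have hCS : C * S = V := by rw [hC]; exact hVXS
  have hSC : S * Cᵀ = Vᵀ := by
    have : (S * Cᵀ)ᵀ = V := by
      rw [transpose_mul, transpose_transpose, hSsym]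
      exact hCS
    calc S * Cᵀ = ((S * Cᵀ)ᵀ)ᵀ := by rw [transpose_transpose]
      _ = Vᵀ := by rw [this]
  have hCV : C * Vᵀ = V * Cᵀ := by
    rw [hC, transpose_mul, hΞsym]
    exact Matrix.mul_assoc V Vggp Vᵀ
  -- expand the two covariance matrices
  have hexp1 := cov_sub_expand mβ mγ B B hβ2 hγ2
  have hexp2 := cov_sub_expand mβ mγ C C hβ2 hγ2
  have hcovgf : cov P mγ mβ = Vᵀ := by rw [hV, cov_transpose']
  rw [hcovgf] at hexp1 hexp2
  rw [← hV, ← hS] at hexp1 hexp2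
  rw [hexp1, hexp2, diff_eq (cov P mβ mβ) V B C S hCS hSC hCV]
  have hpsd := (cov_psd mγ hγ2).mul_mul_conjTranspose_same (B - C)
  rwa [conjTranspose_eq_transpose_of_trivial] at hpsd
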